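/- With notation as in the definition of Ŝ: Ŝ_{r₁,s₁,r₂,s₂}(0, 0, x₂, y₂; D₁, D₂) = 0 unless D₁/gcd(D₁, r₁s₁) divides both x₂ and y₂. Similarly, Ŝ_{r₁,s₁,r₂,s₂}(x₁, y₁, 0, 0; D₁, D₂) = 0 unless D₂/gcd(D₂, r₂s₂) divides both x₁ and y₁. -/

import Mathlib

/-!
Expanding the Kloosterman sum and carrying out the sums over `n₁, m₁, n₂, m₂` first, `Ŝ` becomes
a sum over the admissible `(B₁, C₁, B₂, C₂)` of products of four complete exponential sums
`∑_{n mod D} e(nA/D)`, each of which vanishes unless `D ∣ A`. If `x₁ = y₁ = 0`, a nonzero `Ŝ`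
therefore produces admissible `B, C` with `D₁ ∣ r₁B₁` and `D₁ ∣ s₁(Y₁D₂ − Z₁B₂)`. Reducing the
defining relations `Y₁B₁ + Z₁C₁ ≡ 1`, `B₁B₂ + D₂C₁ ≡ 0` modulo `D₁` then gives `D₁ ∣ r₁s₁D₂`,
`D₁ ∣ r₁s₁B₁` and `D₁ ∣ r₁s₁B₂`, so `D₁ / gcd(D₁, r₁s₁)` divides `D₂`, `B₁` and `B₂`, hence
divides `x₂ ≡ r₂B₂` and `y₂ ≡ s₂(Y₂D₁ − Z₂B₁)` modulo `D₂`. The second claim is symmetric.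
-/

open scoped BigOperators

/-- e(x) = exp(2πix). -/
noncomputable def e (x : ℝ) : ℂ := Complex.exp (2 * Real.pi * Complex.I * x)

/-- A choice of a pair `(Y, Z)` with `Y·b + Z·c ≡ 1 (mod D)`, when one exists. -/
noncomputable def YZ (D : ℕ) (b c : ℤ) : ℤ × ℤ :=
  letI := Classical.propDecidable (∃ p : ℤ × ℤ, p.1 * b + p.2 * c ≡ 1 [ZMOD (D : ℤ)])
  if h : ∃ p : ℤ × ℤ, p.1 * b + p.2 * c ≡ 1 [ZMOD (D : ℤ)] then h.choose else (0, 0)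

/-- The long Weyl element GL(3) Kloosterman sum
`S(n₁,m₂,m₁,n₂;D₁,D₂) = ∑ e((n₁B₁ + m₁(Y₁D₂ − Z₁B₂))/D₁ + (m₂B₂ + n₂(Y₂D₁ − Z₂B₁))/D₂)`,
where the sum runs over `B₁,C₁ mod D₁` and `B₂,C₂ mod D₂` with `gcd(B_j,C_j,D_j)=1` and
`D₁C₂ + B₁B₂ + D₂C₁ ≡ 0 mod D₁D₂`, and `Y_jB_j + Z_jC_j ≡ 1 mod D_j`. -/
noncomputable def SKl (n₁ m₂ m₁ n₂ : ℤ) (D₁ D₂ : ℕ) : ℂ :=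
  ∑ b₁ ∈ Finset.range D₁, ∑ c₁ ∈ Finset.range D₁,
    ∑ b₂ ∈ Finset.range D₂, ∑ c₂ ∈ Finset.range D₂,
      if Nat.gcd (Nat.gcd b₁ c₁) D₁ = 1 ∧ Nat.gcd (Nat.gcd b₂ c₂) D₂ = 1 ∧
          (D₁ : ℤ) * c₂ + (b₁ : ℤ) * b₂ + (D₂ : ℤ) * c₁ ≡ 0 [ZMOD ((D₁ : ℤ) * D₂)] then
        e ((((n₁ * b₁ + m₁ * ((YZ D₁ (b₁ : ℤ) (c₁ : ℤ)).1 * D₂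
                - (YZ D₁ (b₁ : ℤ) (c₁ : ℤ)).2 * b₂) : ℤ)) : ℝ) / (D₁ : ℝ)
          + (((m₂ * b₂ + n₂ * ((YZ D₂ (b₂ : ℤ) (c₂ : ℤ)).1 * D₁
                - (YZ D₂ (b₂ : ℤ) (c₂ : ℤ)).2 * b₁) : ℤ)) : ℝ) / (D₂ : ℝ))
      else 0

/-- The normalized Fourier transform of the long Weyl element Kloosterman sum:
`Ŝ_{r₁,s₁,r₂,s₂}(x₁,y₁,x₂,y₂;D₁,D₂) = (1/(D₁²D₂²)) ∑_{n₁,m₁ mod D₁} ∑_{n₂,m₂ mod D₂}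
  S(n₁r₁, m₂r₂, m₁s₁, n₂s₂; D₁,D₂) e(−(x₁m₁+y₁n₁)/D₁ − (x₂m₂+y₂n₂)/D₂)`. -/
noncomputable def Shat (r₁ s₁ r₂ s₂ x₁ y₁ x₂ y₂ : ℤ) (D₁ D₂ : ℕ) : ℂ :=
  (1 / ((D₁ : ℂ) ^ 2 * (D₂ : ℂ) ^ 2)) *
    ∑ n₁ ∈ Finset.range D₁, ∑ m₁ ∈ Finset.range D₁,
      ∑ n₂ ∈ Finset.range D₂, ∑ m₂ ∈ Finset.range D₂,
        SKl ((n₁ : ℤ) * r₁) ((m₂ : ℤ) * r₂) ((m₁ : ℤ) * s₁) ((n₂ : ℤ) * s₂) D₁ D₂ *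
          e (-(((x₁ * (m₁ : ℤ) + y₁ * (n₁ : ℤ) : ℤ) : ℝ) / (D₁ : ℝ))
            - ((x₂ * (m₂ : ℤ) + y₂ * (n₂ : ℤ) : ℤ) : ℝ) / (D₂ : ℝ))

open Finset

lemma e_add (x y : ℝ) : e (x + y) = e x * e y := by
  rw [e, e, e, ← Complex.exp_add]; congr 1; push_cast; ring

lemma e_nat_mul (n : ℕ) (x : ℝ) : e (n * x) = e x ^ n := by
  rw [e, e, ← Complex.exp_nat_mul]; congr 1; push_cast; ring

lemma e_eq_one_iff {x : ℝ} : e x = 1 ↔ ∃ k : ℤ, x = k := by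
  have h2πI : 2 * (Real.pi : ℂ) * Complex.I ≠ 0 := by simp [Real.pi_ne_zero]
  rw [e, Complex.exp_eq_one_iff]
  refine exists_congr fun k => ⟨fun hk => ?_, fun hk => by rw [hk]; push_cast; ring⟩
  exact_mod_cast mul_left_cancel₀ h2πI (hk.trans (mul_comm _ _))

noncomputable def completeExpSum (D : ℕ) (A : ℤ) : ℂ :=
  ∑ n ∈ range D, e ((((n : ℤ) * A : ℤ) : ℝ) / D)

lemma dvd_of_completeExpSum_ne_zero {D : ℕ} {A : ℤ} (h : completeExpSum D A ≠ 0) :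
    (D : ℤ) ∣ A := by
  have hD : (D : ℝ) ≠ 0 := by
    rintro hD
    simp [completeExpSum, Nat.cast_eq_zero.mp hD] at h
  set z := e (A / D)
  have hterm (n : ℕ) : e ((((n : ℤ) * A : ℤ) : ℝ) / D) = z ^ n := by
    rw [← e_nat_mul]; push_cast; ring_nf
  have hzD : z ^ D = 1 := by
    rw [← e_nat_mul, mul_div_cancel₀ _ hD, e_eq_one_iff]
    exact ⟨A, rfl⟩
  by_contra hA
  have hz : z ≠ 1 := by
    rw [ne_eq, e_eq_one_iff]
    rintro ⟨k, hk⟩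
    rw [div_eq_iff hD] at hk
    exact hA ⟨k, by exact_mod_cast hk.trans (mul_comm _ _)⟩
  simp only [completeExpSum, hterm, geom_sum_eq hz, hzD, sub_self, zero_div] at h
  exact h rfl

lemma Finset.sum_comm₄ {M α₁ α₂ α₃ α₄ β₁ β₂ β₃ β₄ : Type*} [AddCommMonoid M]
    (s₁ : Finset α₁) (s₂ : Finset α₂) (s₃ : Finset α₃) (s₄ : Finset α₄)
    (t₁ : Finset β₁) (t₂ : Finset β₂) (t₃ : Finset β₃) (t₄ : Finset β₄)
    (f : α₁ → α₂ → α₃ → α₄ → β₁ → β₂ → β₃ → β₄ → M) :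
    ∑ a₁ ∈ s₁, ∑ a₂ ∈ s₂, ∑ a₃ ∈ s₃, ∑ a₄ ∈ s₄, ∑ b₁ ∈ t₁, ∑ b₂ ∈ t₂, ∑ b₃ ∈ t₃, ∑ b₄ ∈ t₄,
        f a₁ a₂ a₃ a₄ b₁ b₂ b₃ b₄ =
      ∑ b₁ ∈ t₁, ∑ b₂ ∈ t₂, ∑ b₃ ∈ t₃, ∑ b₄ ∈ t₄, ∑ a₁ ∈ s₁, ∑ a₂ ∈ s₂, ∑ a₃ ∈ s₃, ∑ a₄ ∈ s₄,
        f a₁ a₂ a₃ a₄ b₁ b₂ b₃ b₄ := by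
  simpa only [sum_product] using
    sum_comm (s := s₁ ×ˢ s₂ ×ˢ s₃ ×ˢ s₄) (t := t₁ ×ˢ t₂ ×ˢ t₃ ×ˢ t₄)
      (f := fun a b => f a.1 a.2.1 a.2.2.1 a.2.2.2 b.1 b.2.1 b.2.2.1 b.2.2.2)

lemma Finset.sum_mul_sum₄ {R α β γ δ : Type*} [CommSemiring R]
    (s : Finset α) (t : Finset β) (u : Finset γ) (v : Finset δ)
    (f : α → R) (g : β → R) (h : γ → R) (k : δ → R) :
    (∑ a ∈ s, f a) * (∑ b ∈ t, g b) * (∑ c ∈ u, h c) * (∑ d ∈ v, k d) =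
      ∑ a ∈ s, ∑ b ∈ t, ∑ c ∈ u, ∑ d ∈ v, f a * g b * h c * k d := by
  simp only [← mul_sum, ← sum_mul]

lemma shat_eq_sum_completeExpSum (r₁ s₁ r₂ s₂ x₁ y₁ x₂ y₂ : ℤ) (D₁ D₂ : ℕ) :
    Shat r₁ s₁ r₂ s₂ x₁ y₁ x₂ y₂ D₁ D₂ = 1 / ((D₁ : ℂ) ^ 2 * (D₂ : ℂ) ^ 2) *
      ∑ b₁ ∈ range D₁, ∑ c₁ ∈ range D₁, ∑ b₂ ∈ range D₂, ∑ c₂ ∈ range D₂,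
        if Nat.gcd (Nat.gcd b₁ c₁) D₁ = 1 ∧ Nat.gcd (Nat.gcd b₂ c₂) D₂ = 1 ∧
            (D₁ : ℤ) * c₂ + (b₁ : ℤ) * b₂ + (D₂ : ℤ) * c₁ ≡ 0 [ZMOD ((D₁ : ℤ) * D₂)] then
          completeExpSum D₁ (r₁ * b₁ - y₁) *
            completeExpSum D₁ (s₁ * ((YZ D₁ b₁ c₁).1 * D₂ - (YZ D₁ b₁ c₁).2 * b₂) - x₁) *
            completeExpSum D₂ (s₂ * ((YZ D₂ b₂ c₂).1 * D₁ - (YZ D₂ b₂ c₂).2 * b₁) - y₂) *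
            completeExpSum D₂ (r₂ * b₂ - x₂)
        else 0 := by
  simp only [Shat, SKl, sum_mul, ite_mul, zero_mul]
  rw [sum_comm₄]
  refine congrArg _ (sum_congr rfl fun b₁ _ => sum_congr rfl fun c₁ _ =>
    sum_congr rfl fun b₂ _ => sum_congr rfl fun c₂ _ => ?_)
  split_ifs
  · simp only [completeExpSum, sum_mul_sum₄, ← e_add]
    refine sum_congr rfl fun n₁ _ => sum_congr rfl fun m₁ _ =>
      sum_congr rfl fun n₂ _ => sum_congr rfl fun m₂ _ => congrArg e ?_
    push_cast
    ring
  · simp only [sum_const_zero]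

lemma exists_of_shat_ne_zero {r₁ s₁ r₂ s₂ x₁ y₁ x₂ y₂ : ℤ} {D₁ D₂ : ℕ}
    (h : Shat r₁ s₁ r₂ s₂ x₁ y₁ x₂ y₂ D₁ D₂ ≠ 0) :
    ∃ b₁ c₁ b₂ c₂ : ℕ, Nat.gcd (Nat.gcd b₁ c₁) D₁ = 1 ∧ Nat.gcd (Nat.gcd b₂ c₂) D₂ = 1 ∧
      (D₁ : ℤ) * D₂ ∣ D₁ * c₂ + b₁ * b₂ + D₂ * c₁ ∧
      (D₁ : ℤ) ∣ r₁ * b₁ - y₁ ∧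
      (D₁ : ℤ) ∣ s₁ * ((YZ D₁ b₁ c₁).1 * D₂ - (YZ D₁ b₁ c₁).2 * b₂) - x₁ ∧
      (D₂ : ℤ) ∣ s₂ * ((YZ D₂ b₂ c₂).1 * D₁ - (YZ D₂ b₂ c₂).2 * b₁) - y₂ ∧
      (D₂ : ℤ) ∣ r₂ * b₂ - x₂ := by
  rw [shat_eq_sum_completeExpSum] at h
  obtain ⟨b₁, -, h⟩ := exists_ne_zero_of_sum_ne_zero (right_ne_zero_of_mul h)
  obtain ⟨c₁, -, h⟩ := exists_ne_zero_of_sum_ne_zero h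
  obtain ⟨b₂, -, h⟩ := exists_ne_zero_of_sum_ne_zero h
  obtain ⟨c₂, -, h⟩ := exists_ne_zero_of_sum_ne_zero h
  split_ifs at h with hcond
  · obtain ⟨hg₁, hg₂, hc⟩ := hcond
    simp only [mul_ne_zero_iff] at h
    obtain ⟨⟨⟨h₁, h₂⟩, h₃⟩, h₄⟩ := h
    exact ⟨b₁, c₁, b₂, c₂, hg₁, hg₂, Int.modEq_zero_iff_dvd.mp hc,
      dvd_of_completeExpSum_ne_zero h₁, dvd_of_completeExpSum_ne_zero h₂,
      dvd_of_completeExpSum_ne_zero h₃, dvd_of_completeExpSum_ne_zero h₄⟩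
  · exact absurd rfl h

lemma exists_mul_add_mul_modEq_one {b c D : ℕ} (h : Nat.gcd (Nat.gcd b c) D = 1) :
    ∃ p : ℤ × ℤ, p.1 * b + p.2 * c ≡ 1 [ZMOD D] := by
  obtain ⟨u, v, huv⟩ := Nat.Coprime.isCoprime h
  have hbezout := Int.gcd_eq_gcd_ab b c
  rw [Int.gcd_natCast_natCast] at hbezout
  refine ⟨(u * Int.gcdA b c, u * Int.gcdB b c), Int.modEq_iff_dvd.mpr ⟨v, ?_⟩⟩
  linear_combination -huv + u * hbezout

lemma YZ_spec {D : ℕ} {b c : ℤ} (h : ∃ p : ℤ × ℤ, p.1 * b + p.2 * c ≡ 1 [ZMOD D]) :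
    (YZ D b c).1 * b + (YZ D b c).2 * c ≡ 1 [ZMOD D] := by
  rw [YZ, dif_pos h]
  exact h.choose_spec

lemma kloosterman_relations_mul_eq_zero {R : Type*} [CommRing R] {D' r s b c b' Y Z : R}
    (hYZ : Y * b + Z * c = 1) (hc : b * b' + D' * c = 0) (hr : r * b = 0)
    (hs : s * (Y * D' - Z * b') = 0) :
    s * b' = 0 ∧ r * s * D' = 0 :=
  ⟨by linear_combination (-(s * b')) * hYZ + (s * Y) * hc - c * hs,
    by linear_combination (-(r * s * D')) * hYZ + (s * D' * Y - s * Z * b') * hr + (r * s * Z) * hc⟩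

lemma Int.natCast_div_gcd_dvd_of_dvd_mul {D : ℕ} {a c : ℤ} (hD : D ≠ 0) (h : (D : ℤ) ∣ a * c) :
    ((D / Int.gcd D a : ℕ) : ℤ) ∣ c := by
  rw [Int.natCast_div, Int.div_dvd_iff_dvd_mul (Int.gcd_dvd_left _ _)
    (Int.natCast_ne_zero.mpr (Int.gcd_pos_of_ne_zero_left _ (by exact_mod_cast hD)).ne'),
    Int.coe_gcd]
  exact dvd_gcd_mul_of_dvd_mul h

lemma div_gcd_dvd_of_kloosterman_relations {D D' : ℕ} (hD : D ≠ 0)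
    {r s r' s' b c b' c' Y Z Y' Z' x y : ℤ}
    (hYZ : Y * b + Z * c ≡ 1 [ZMOD D]) (hc : (D : ℤ) * D' ∣ D * c' + b * b' + D' * c)
    (hr : (D : ℤ) ∣ r * b) (hs : (D : ℤ) ∣ s * (Y * D' - Z * b'))
    (hx : (D' : ℤ) ∣ r' * b' - x) (hy : (D' : ℤ) ∣ s' * (Y' * D - Z' * b) - y) :
    ((D / Int.gcd D (r * s) : ℕ) : ℤ) ∣ x ∧ ((D / Int.gcd D (r * s) : ℕ) : ℤ) ∣ y := by
  have hc' : ((D * c' + b * b' + D' * c : ℤ) : ZMod D) = 0 :=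
    (ZMod.intCast_zmod_eq_zero_iff_dvd _ D).mpr ((dvd_mul_right _ _).trans hc)
  have hr' := (ZMod.intCast_zmod_eq_zero_iff_dvd _ D).mpr hr
  have hs' := (ZMod.intCast_zmod_eq_zero_iff_dvd _ D).mpr hs
  have hYZ' := (ZMod.intCast_eq_intCast_iff _ _ D).mpr hYZ
  push_cast [ZMod.natCast_self] at hc' hr' hs' hYZ'
  obtain ⟨hsb', hrsD'⟩ := kloosterman_relations_mul_eq_zero hYZ' (by simpa using hc') hr' hs'
  have hsb : (D : ℤ) ∣ s * b' :=
    (ZMod.intCast_zmod_eq_zero_iff_dvd _ D).mp (by push_cast; exact hsb')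
  have hrsD : (D : ℤ) ∣ r * s * D' :=
    (ZMod.intCast_zmod_eq_zero_iff_dvd _ D).mp (by push_cast; exact hrsD')
  set Q := ((D / Int.gcd D (r * s) : ℕ) : ℤ)
  have hQD : Q ∣ D := Int.natCast_dvd_natCast.mpr
    (Nat.div_dvd_of_dvd (Int.natCast_dvd_natCast.mp (Int.gcd_dvd_left _ _)))
  have hQD' : Q ∣ D' := Int.natCast_div_gcd_dvd_of_dvd_mul hD hrsD
  have hQb : Q ∣ b := Int.natCast_div_gcd_dvd_of_dvd_mul hD
    (by rw [mul_right_comm]; exact hr.mul_right s)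
  have hQb' : Q ∣ b' := Int.natCast_div_gcd_dvd_of_dvd_mul hD
    (by rw [mul_assoc]; exact hsb.mul_left r)
  exact ⟨(dvd_sub_right (hQb'.mul_left r')).mp (hQD'.trans hx),
    (dvd_sub_right (((hQD.mul_left Y').sub (hQb.mul_left Z')).mul_left s')).mp (hQD'.trans hy)⟩

theorem shat_degenerate_divisibility_general (r₁ s₁ r₂ s₂ : ℤ) (D₁ D₂ : ℕ) :
    (∀ x₂ y₂ : ℤ, Shat r₁ s₁ r₂ s₂ 0 0 x₂ y₂ D₁ D₂ ≠ 0 →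
      ((D₁ / Int.gcd (D₁ : ℤ) (r₁ * s₁) : ℕ) : ℤ) ∣ x₂ ∧
        ((D₁ / Int.gcd (D₁ : ℤ) (r₁ * s₁) : ℕ) : ℤ) ∣ y₂) ∧
    (∀ x₁ y₁ : ℤ, Shat r₁ s₁ r₂ s₂ x₁ y₁ 0 0 D₁ D₂ ≠ 0 →
      ((D₂ / Int.gcd (D₂ : ℤ) (r₂ * s₂) : ℕ) : ℤ) ∣ x₁ ∧
        ((D₂ / Int.gcd (D₂ : ℤ) (r₂ * s₂) : ℕ) : ℤ) ∣ y₁) := by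
  refine ⟨fun x₂ y₂ h => ?_, fun x₁ y₁ h => ?_⟩
  · obtain ⟨b₁, c₁, b₂, c₂, hg₁, -, hc, hr, hs, hy, hx⟩ := exists_of_shat_ne_zero h
    have hD₁ : D₁ ≠ 0 := by rintro rfl; simp [Shat] at h
    exact div_gcd_dvd_of_kloosterman_relations hD₁ (YZ_spec (exists_mul_add_mul_modEq_one hg₁))
      hc (by simpa using hr) (by simpa using hs) hx hy
  · obtain ⟨b₁, c₁, b₂, c₂, -, hg₂, hc, hx, hy, hs, hr⟩ := exists_of_shat_ne_zero h
    have hD₂ : D₂ ≠ 0 := by rintro rfl; simp [Shat] at h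
    exact (div_gcd_dvd_of_kloosterman_relations (c' := c₁) hD₂
      (YZ_spec (exists_mul_add_mul_modEq_one hg₂)) (by convert hc using 1 <;> ring)
      (by simpa using hr) (by simpa using hs) hx hy).symm

theorem shat_degenerate_divisibility (r₁ s₁ r₂ s₂ : ℤ)
    (hr₁ : r₁ ≠ 0) (hs₁ : s₁ ≠ 0) (hr₂ : r₂ ≠ 0) (hs₂ : s₂ ≠ 0)
    (D₁ D₂ : ℕ) (hD₁ : 0 < D₁) (hD₂ : 0 < D₂) :
    (∀ x₂ y₂ : ℤ, Shat r₁ s₁ r₂ s₂ 0 0 x₂ y₂ D₁ D₂ ≠ 0 →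
      ((D₁ / Int.gcd (D₁ : ℤ) (r₁ * s₁) : ℕ) : ℤ) ∣ x₂ ∧
        ((D₁ / Int.gcd (D₁ : ℤ) (r₁ * s₁) : ℕ) : ℤ) ∣ y₂) ∧
    (∀ x₁ y₁ : ℤ, Shat r₁ s₁ r₂ s₂ x₁ y₁ 0 0 D₁ D₂ ≠ 0 →
      ((D₂ / Int.gcd (D₂ : ℤ) (r₂ * s₂) : ℕ) : ℤ) ∣ x₁ ∧
        ((D₂ / Int.gcd (D₂ : ℤ) (r₂ * s₂) : ℕ) : ℤ) ∣ y₁) :=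
  shat_degenerate_divisibility_general r₁ s₁ r₂ s₂ D₁ D₂
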